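/- Key lattice identity for the product of two elliptic curves: let L = ℤf₁ ⊕ ℤf₂ ⊕ L' be an even lattice with (f₁,f₁) = (f₂,f₂) = 0, (f₁,f₂) = 1, and L' orthogonal to f₁ and f₂. Let r, r₁, d, d₁, n be integers with d r₁ − r d₁ = 1, and set v = (r, d f₂ − (r−r₁) n f₁, −(d−d₁) n) ∈ Λ(L). For x = (x₁, x₂ f₁ + x₃ f₂ + D, x₄) with x₁,…,x₄ ∈ ℤ and D ∈ L', define y₁ = d x₁ − r x₃, y₂ = −(d−d₁)x₂ + (r−r₁)x₄ − n((d−2d₁)x₁ − (r−2r₁)x₃), y₃ = −d₁ x₁ + r₁ x₃, y₄ = d x₂ − r x₄ + n((d−d₁)x₁ − (r−r₁)x₃). Then (i) ⟨v, v⟩ = 2n; (ii) ⟨v, x⟩ = y₄, so x ∈ v^⊥ if and only if y₄ = 0; and (iii) if y₄ = 0, then ⟨x, x⟩ = 2 y₁ y₂ − 2 n y₃² + (D, D). -/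

import Mathlib

/-! Everything is a polynomial identity in the coordinates. The heart of (iii) is that
`y₁ y₂ - n y₃² + z y₄ = (d r₁ - r d₁)(x₂ x₃ - x₁ x₄)` with `z = (d - d₁) x₁ - (r - r₁) x₃`,
while `⟨x, x⟩ = 2 (x₂ x₃ - x₁ x₄) + (D, D)`; so on `v^⊥` and for `d r₁ - r d₁ = 1` the two
quadratic forms agree. -/

theorem beauville_coords_identity {R : Type*} [CommRing R] (r r₁ d d₁ n x₁ x₂ x₃ x₄ : R) :
    (d * x₁ - r * x₃) * (-(d - d₁) * x₂ + (r - r₁) * x₄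
        - n * ((d - 2 * d₁) * x₁ - (r - 2 * r₁) * x₃))
      - n * (-d₁ * x₁ + r₁ * x₃) ^ 2
      + ((d - d₁) * x₁ - (r - r₁) * x₃) * (d * x₂ - r * x₄ + n * ((d - d₁) * x₁ - (r - r₁) * x₃))
    = (d * r₁ - r * d₁) * (x₂ * x₃ - x₁ * x₄) := by
  ring

theorem mukai_identity_product_elliptic_curves_general
    (L' : Type*) [AddCommGroup L'] [Module ℤ L']
    (B' : L' →ₗ[ℤ] L' →ₗ[ℤ] ℤ)
    (b : (ℤ × ℤ × L') → (ℤ × ℤ × L') → ℤ)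
    (hb : ∀ u u' : ℤ × ℤ × L',
      b u u' = u.1 * u'.2.1 + u.2.1 * u'.1 + B' u.2.2 u'.2.2)
    (mukai : (ℤ × (ℤ × ℤ × L') × ℤ) → (ℤ × (ℤ × ℤ × L') × ℤ) → ℤ)
    (hmukai : ∀ x y : ℤ × (ℤ × ℤ × L') × ℤ,
      mukai x y = b x.2.1 y.2.1 - x.1 * y.2.2 - y.1 * x.2.2)
    (r r₁ d d₁ n : ℤ) (hrd : d * r₁ - r * d₁ = 1)
    (v : ℤ × (ℤ × ℤ × L') × ℤ)
    (hv : v = (r, (-(r - r₁) * n, d, (0 : L')), -(d - d₁) * n))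
    (x₁ x₂ x₃ x₄ : ℤ) (D : L')
    (x : ℤ × (ℤ × ℤ × L') × ℤ)
    (hx : x = (x₁, (x₂, x₃, D), x₄))
    (y₁ y₂ y₃ y₄ : ℤ)
    (hy₁ : y₁ = d * x₁ - r * x₃)
    (hy₂ : y₂ = -(d - d₁) * x₂ + (r - r₁) * x₄
      - n * ((d - 2 * d₁) * x₁ - (r - 2 * r₁) * x₃))
    (hy₃ : y₃ = -d₁ * x₁ + r₁ * x₃)
    (hy₄ : y₄ = d * x₂ - r * x₄ + n * ((d - d₁) * x₁ - (r - r₁) * x₃)) :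
    mukai v v = 2 * n ∧
    mukai v x = y₄ ∧
    (y₄ = 0 → mukai x x = 2 * y₁ * y₂ - 2 * n * y₃ ^ 2 + B' D D) := by
  subst hv hx
  simp only [hmukai, hb, map_zero, LinearMap.zero_apply]
  refine ⟨by linear_combination 2 * n * hrd, by rw [hy₄]; ring, fun hv_perp => ?_⟩
  have key := beauville_coords_identity r r₁ d d₁ n x₁ x₂ x₃ x₄
  rw [← hy₁, ← hy₂, ← hy₃, ← hy₄, hv_perp, hrd] at key
  linear_combination -2 * key

/-- Key lattice identity for the product of two elliptic curves.
The even lattice `L = ℤf₁ ⊕ ℤf₂ ⊕ L'` (with `(f₁,f₁) = (f₂,f₂) = 0`, `(f₁,f₂) = 1`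
and `L'` orthogonal to `f₁`, `f₂`) is modeled as `ℤ × ℤ × L'`, an element
`(u₁, u₂, D)` standing for `u₁ f₁ + u₂ f₂ + D`, with bilinear form
`b((u₁,u₂,D),(u₁',u₂',D')) = u₁ u₂' + u₂ u₁' + B' D D'`.
The Mukai lattice `Λ(L) = ℤ ⊕ L ⊕ ℤ` carries `⟨(r,ξ,a),(r',ξ',a')⟩ = b(ξ,ξ') − r a' − r' a`.
For `v = (r, d f₂ − (r−r₁) n f₁, −(d−d₁) n)` with `d r₁ − r d₁ = 1`, and
`x = (x₁, x₂ f₁ + x₃ f₂ + D, x₄)`, with `y₁, y₂, y₃, y₄` as defined: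
(i) `⟨v,v⟩ = 2n`; (ii) `⟨v,x⟩ = y₄`, so `x ∈ v^⊥ ↔ y₄ = 0`;
(iii) if `y₄ = 0` then `⟨x,x⟩ = 2 y₁ y₂ − 2 n y₃² + (D,D)`. -/
theorem mukai_identity_product_elliptic_curves
    (L' : Type*) [AddCommGroup L'] [Module ℤ L'] [Module.Free ℤ L'] [Module.Finite ℤ L']
    (B' : L' →ₗ[ℤ] L' →ₗ[ℤ] ℤ)
    (hsymm : ∀ D E : L', B' D E = B' E D)
    (heven : ∀ D : L', 2 ∣ B' D D)
    (b : (ℤ × ℤ × L') → (ℤ × ℤ × L') → ℤ)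
    (hb : ∀ u u' : ℤ × ℤ × L',
      b u u' = u.1 * u'.2.1 + u.2.1 * u'.1 + B' u.2.2 u'.2.2)
    (mukai : (ℤ × (ℤ × ℤ × L') × ℤ) → (ℤ × (ℤ × ℤ × L') × ℤ) → ℤ)
    (hmukai : ∀ x y : ℤ × (ℤ × ℤ × L') × ℤ,
      mukai x y = b x.2.1 y.2.1 - x.1 * y.2.2 - y.1 * x.2.2)
    (r r₁ d d₁ n : ℤ) (hrd : d * r₁ - r * d₁ = 1)
    (v : ℤ × (ℤ × ℤ × L') × ℤ)
    (hv : v = (r, (-(r - r₁) * n, d, (0 : L')), -(d - d₁) * n))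
    (x₁ x₂ x₃ x₄ : ℤ) (D : L')
    (x : ℤ × (ℤ × ℤ × L') × ℤ)
    (hx : x = (x₁, (x₂, x₃, D), x₄))
    (y₁ y₂ y₃ y₄ : ℤ)
    (hy₁ : y₁ = d * x₁ - r * x₃)
    (hy₂ : y₂ = -(d - d₁) * x₂ + (r - r₁) * x₄
      - n * ((d - 2 * d₁) * x₁ - (r - 2 * r₁) * x₃))
    (hy₃ : y₃ = -d₁ * x₁ + r₁ * x₃)
    (hy₄ : y₄ = d * x₂ - r * x₄ + n * ((d - d₁) * x₁ - (r - r₁) * x₃)) :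
    mukai v v = 2 * n ∧
    mukai v x = y₄ ∧
    (y₄ = 0 → mukai x x = 2 * y₁ * y₂ - 2 * n * y₃ ^ 2 + B' D D) :=
  mukai_identity_product_elliptic_curves_general L' B' b hb mukai hmukai r r₁ d d₁ n hrd v hv x₁ x₂
    x₃ x₄ D x hx y₁ y₂ y₃ y₄ hy₁ hy₂ hy₃ hy₄
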